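/- Let w and w' be uniformly recurrent right-infinite words over Σ = {x_1, …, x_n} in which every letter occurs, and let A = A_w and B = A_{w'} (projectively simple monomial algebras). Then every graded F-algebra isomorphism f : A → B is given by a permutation and scaling of the generators: there exist λ_1, …, λ_n ∈ F^× and σ ∈ S_n with f(x_i) = λ_i x_{σ(i)} for all i. -/

import Mathlib

noncomputable section

open scoped BigOperators

/-- The free associative `F`-algebra on `m` generators, realized as the monoid
algebra of the free monoid on `Fin m`. -/
abbrev FreeAlg (F : Type) [Field F] (m : ℕ) : Type :=
  MonoidAlgebra F (FreeMonoid (Fin m))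

variable (F : Type) [Field F] {m : ℕ}

/-- The element of the free algebra corresponding to a word `u`. -/
def wordElem (u : List (Fin m)) : FreeAlg F m :=
  MonoidAlgebra.of F (FreeMonoid (Fin m)) (FreeMonoid.ofList u)

/-- The relation identifying the forbidden words in `W` with `0`. -/
def monRel (W : Set (List (Fin m))) : FreeAlg F m → FreeAlg F m → Prop :=
  fun a b => (∃ u ∈ W, a = wordElem F u) ∧ b = 0

/-- The monomial algebra `F⟨x_1,…,x_m⟩/⟨W⟩` determined by the set `W` of forbidden
words. -/
abbrev MonAlg (W : Set (List (Fin m))) : Type :=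
  RingQuot (monRel F W)

/-- The canonical projection from the free algebra onto the monomial algebra. -/
def monAlgPi (W : Set (List (Fin m))) : FreeAlg F m →ₐ[F] MonAlg F W :=
  RingQuot.mkAlgHom F (monRel F W)

/-- The image of the word `u` in the monomial algebra; `u` is a *nonzero monomial*
of the monomial algebra iff `mono F W u ≠ 0`. -/
def mono (W : Set (List (Fin m))) (u : List (Fin m)) : MonAlg F W :=
  monAlgPi F W (wordElem F u)

/-- The degree-`d` homogeneous component of the monomial algebra, spanned by the
images of the words of length `d`. -/
def homog (W : Set (List (Fin m))) (d : ℕ) : Submodule F (MonAlg F W) :=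
  Submodule.span F { a | ∃ u : List (Fin m), u.length = d ∧ a = mono F W u }
/-- The set of finite factors (subwords) of the right-infinite word `w`. -/
def factorsOf (w : ℕ → Fin m) : Set (List (Fin m)) :=
  { u | ∃ i : ℕ, u = (List.range u.length).map fun k => w (i + k) }

/-- `w` is uniformly recurrent: every factor `u` of `w` occurs in every sufficiently
long factor of `w`. -/
def UniformlyRecurrent (w : ℕ → Fin m) : Prop :=
  ∀ u ∈ factorsOf w, ∃ C : ℕ, ∀ v ∈ factorsOf w, v.length = C → u <:+: v

/-- `w` is eventually periodic. -/
def EventuallyPeriodic (w : ℕ → Fin m) : Prop :=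
  ∃ p : ℕ, 0 < p ∧ ∃ N : ℕ, ∀ i : ℕ, N ≤ i → w (i + p) = w i

/-!
In degree one a graded isomorphism `f : A_w ≃ A_{w'}` is an invertible matrix `c`:
`f xᵢ = ∑ⱼ cᵢⱼ yⱼ` and `f⁻¹ yⱼ = ∑ᵢ (c⁻¹)ⱼᵢ xᵢ`. Expanding `f` on a word `U`, the coefficient of a
word `V` of `B` is `∏ₖ c_{Uₖ Vₖ}`, and nonzero monomials are linearly independent; since `f U = 0`
when `U` is not a factor of `w`, a factor `V` of `w'` with all `c_{Uₖ Vₖ} ≠ 0` forces `U` to be a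
factor of `w`, and symmetrically for `c⁻¹`. So if `cᵢⱼ ≠ 0` and `(c⁻¹)ⱼ'ᵢ ≠ 0`, substituting `j'`
for `j` maps factors of `w'` to factors of `w'`. By uniform recurrence every long factor of `w'`
contains `j`, hence `j' = j`. Thus row `i` of `c` has a single nonzero entry, in column `σ i`, and
`c c⁻¹ = 1` makes `σ` injective.
-/

section MonomialAlgebra

variable {F} {W : Set (List (Fin m))}

theorem wordElem_append (u v : List (Fin m)) :
    wordElem F (u ++ v) = wordElem F u * wordElem F v := by
  simp [wordElem, FreeMonoid.ofList_append]

theorem mono_append (u v : List (Fin m)) : mono F W (u ++ v) = mono F W u * mono F W v := by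
  simp [mono, wordElem_append]

theorem mono_nil : mono F W [] = 1 :=
  map_one (monAlgPi F W)

theorem mono_eq_zero_of_mem {u : List (Fin m)} (hu : u ∈ W) : mono F W u = 0 :=
  (RingQuot.mkAlgHom_rel F (show monRel F W (wordElem F u) 0 from ⟨⟨u, hu, rfl⟩, rfl⟩)).trans
    (map_zero _)

def IsExtensionClosed (W : Set (List (Fin m))) : Prop :=
  ∀ u v : List (Fin m), u ∈ W → u ++ v ∈ W ∧ v ++ u ∈ W

variable (F W) in
abbrev forbiddenSpan : Submodule F (FreeAlg F m) :=
  MonoidAlgebra.supported F F {g | FreeMonoid.toList g ∈ W}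

theorem mul_mem_forbiddenSpan (hW : IsExtensionClosed W) {a b : FreeAlg F m}
    (h : a ∈ forbiddenSpan F W ∨ b ∈ forbiddenSpan F W) : a * b ∈ forbiddenSpan F W := by
  classical
  rw [MonoidAlgebra.mem_supported] at h ⊢
  intro x hx
  obtain ⟨g, hg, g', hg', rfl⟩ :=
    Finset.mem_mul.1 (MonoidAlgebra.support_coeff_mul_subset a b hx)
  rcases h with h | h
  · exact (hW _ _ (h hg)).1
  · exact (hW _ _ (h hg')).2

theorem sub_mem_forbiddenSpan_of_rel (hW : IsExtensionClosed W) {a b : FreeAlg F m}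
    (h : RingQuot.Rel (monRel F W) a b) : a - b ∈ forbiddenSpan F W := by
  induction h with
  | of h =>
    obtain ⟨⟨u, hu, rfl⟩, rfl⟩ := h
    simpa [wordElem, MonoidAlgebra.mem_supported] using hu
  | add_left _ ih => simpa using ih
  | mul_left _ ih => simpa [sub_mul] using mul_mem_forbiddenSpan hW (.inl ih)
  | mul_right _ ih => simpa [mul_sub] using mul_mem_forbiddenSpan hW (.inr ih)

theorem sub_mem_forbiddenSpan_of_eqvGen (hW : IsExtensionClosed W) {a b : FreeAlg F m}
    (h : Relation.EqvGen (RingQuot.Rel (monRel F W)) a b) : a - b ∈ forbiddenSpan F W := by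
  induction h with
  | rel _ _ h => exact sub_mem_forbiddenSpan_of_rel hW h
  | refl => simp
  | symm _ _ _ ih => simpa using neg_mem ih
  | trans _ _ _ _ _ ih₁ ih₂ => simpa using add_mem ih₁ ih₂

theorem mem_forbiddenSpan_of_monAlgPi_eq_zero (hW : IsExtensionClosed W) {a : FreeAlg F m}
    (h : monAlgPi F W a = 0) : a ∈ forbiddenSpan F W := by
  have hq : (⟨Quot.mk _ a⟩ : MonAlg F W) = ⟨Quot.mk _ 0⟩ := by
    rw [RingQuot.zero_quot]
    simpa [monAlgPi, RingQuot.mkAlgHom_def, RingQuot.mkRingHom_def] using h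
  simpa using sub_mem_forbiddenSpan_of_eqvGen hW (Quot.eqvGen_exact (RingQuot.mk.inj hq))

def coeffAt (hW : IsExtensionClosed W) {u : List (Fin m)} (hu : u ∉ W) : MonAlg F W →ₗ[F] F :=
  (LinearMap.ker (monAlgPi F W).toLinearMap).liftQ
      (Finsupp.lapply (FreeMonoid.ofList u) ∘ₗ (MonoidAlgebra.coeffLinearEquiv F).toLinearMap)
      (fun _ ha =>
        MonoidAlgebra.mem_supported'.1 (mem_forbiddenSpan_of_monAlgPi_eq_zero hW ha) _ hu)
    ∘ₗ ((monAlgPi F W).toLinearMap.quotKerEquivOfSurjective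
      (RingQuot.mkAlgHom_surjective F _)).symm.toLinearMap

theorem coeffAt_monAlgPi (hW : IsExtensionClosed W) {u : List (Fin m)} (hu : u ∉ W)
    (a : FreeAlg F m) : coeffAt hW hu (monAlgPi F W a) = a.coeff (FreeMonoid.ofList u) := by
  have h : ((monAlgPi F W).toLinearMap.quotKerEquivOfSurjective
      (RingQuot.mkAlgHom_surjective F _)).symm (monAlgPi F W a) = Submodule.Quotient.mk a :=
    (LinearEquiv.symm_apply_eq _).2 rfl
  simp only [coeffAt, LinearMap.coe_comp, LinearEquiv.coe_coe, Function.comp_apply, h]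
  rfl

theorem coeffAt_mono (hW : IsExtensionClosed W) {u : List (Fin m)} (hu : u ∉ W)
    (v : List (Fin m)) : coeffAt hW hu (mono F W v) = if v = u then 1 else 0 := by
  classical
  simp [mono, coeffAt_monAlgPi, wordElem, Finsupp.single_apply]

theorem linearIndependent_mono {ι : Type*} (hW : IsExtensionClosed W) {u : ι → List (Fin m)}
    (hu : Function.Injective u) (huW : ∀ i, u i ∉ W) :
    LinearIndependent F (fun i => mono F W (u i)) :=
  .of_pairwise_dual_eq_zero_one _ (fun i => coeffAt hW (huW i))
    (fun i j hij => by simp [coeffAt_mono, hu.ne hij.symm])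
    (fun i => by simp [coeffAt_mono])

theorem homog_one_eq_span :
    homog F W 1 = Submodule.span F (Set.range fun i => mono F W [i]) := by
  refine congrArg _ (Set.ext fun a => ?_)
  constructor
  · rintro ⟨u, hu, rfl⟩
    obtain ⟨i, rfl⟩ := List.length_eq_one_iff.1 hu
    exact ⟨i, rfl⟩
  · rintro ⟨i, rfl⟩
    exact ⟨[i], rfl, rfl⟩

end MonomialAlgebra

section Factors

variable {w : ℕ → Fin m}

theorem mem_factorsOf_iff {u : List (Fin m)} :
    u ∈ factorsOf w ↔ ∃ i, ∀ k (hk : k < u.length), u[k] = w (i + k) := by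
  refine exists_congr fun i => ⟨fun h k hk => ?_, fun h => List.ext_getElem (by simp) ?_⟩
  · rw [List.getElem_of_eq h hk]
    simp
  · intro k hk _
    simp [h k hk]

theorem mem_factorsOf_of_append_mem {u v : List (Fin m)} (h : u ++ v ∈ factorsOf w) :
    u ∈ factorsOf w ∧ v ∈ factorsOf w := by
  obtain ⟨i, hi⟩ := mem_factorsOf_iff.1 h
  refine ⟨mem_factorsOf_iff.2 ⟨i, fun k hk => ?_⟩,
    mem_factorsOf_iff.2 ⟨i + u.length, fun k hk => ?_⟩⟩
  · rw [← hi k (by simp; omega), List.getElem_append_left hk]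
  · rw [Nat.add_assoc, ← hi (u.length + k) (by simp; omega), List.getElem_append_right (by omega)]
    simp

theorem isExtensionClosed_compl_factorsOf (w : ℕ → Fin m) : IsExtensionClosed (factorsOf w)ᶜ :=
  fun _ _ hu => ⟨fun h => hu (mem_factorsOf_of_append_mem h).1,
    fun h => hu (mem_factorsOf_of_append_mem h).2⟩

theorem ofFn_mem_factorsOf (w : ℕ → Fin m) (i d : ℕ) :
    List.ofFn (fun k : Fin d => w (i + k)) ∈ factorsOf w :=
  mem_factorsOf_iff.2 ⟨i, fun k hk => by simp⟩

theorem singleton_mem_factorsOf (w : ℕ → Fin m) (i : ℕ) : [w i] ∈ factorsOf w := by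
  simpa using ofFn_mem_factorsOf w i 1

theorem UniformlyRecurrent.mem_range_of_map_mem (hw : UniformlyRecurrent w) {j : Fin m}
    (hj : j ∈ Set.range w) {φ : Fin m → Fin m} (hφ : ∀ u ∈ factorsOf w, u.map φ ∈ factorsOf w) :
    j ∈ Set.range φ := by
  obtain ⟨i, rfl⟩ := hj
  obtain ⟨C, hC⟩ := hw _ (singleton_mem_factorsOf w i)
  have hu := hφ _ (ofFn_mem_factorsOf w 0 C)
  obtain ⟨a, -, ha⟩ := List.mem_map.1 ((hC _ hu (by simp)).subset (List.mem_singleton_self _))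
  exact ⟨a, ha⟩

end Factors

section Expansion

variable {F} {W W' : Set (List (Fin m))} {g : MonAlg F W →ₐ[F] MonAlg F W'}
  {c : Matrix (Fin m) (Fin m) F}

theorem map_mono_ofFn (hg : ∀ i, g (mono F W [i]) = ∑ j, c i j • mono F W' [j]) {d : ℕ}
    (U : Fin d → Fin m) :
    g (mono F W (List.ofFn U)) =
      ∑ V : Fin d → Fin m, (∏ k, c (U k) (V k)) • mono F W' (List.ofFn V) := by
  induction d with
  | zero => simp [mono_nil]
  | succ d ih =>
    rw [List.ofFn_succ, ← List.singleton_append, mono_append, map_mul, hg, ih,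
      Finset.sum_mul_sum, ← Fintype.sum_prod_type', ← (Fin.consEquiv _).sum_comp]
    refine Fintype.sum_congr _ _ fun ⟨j, V⟩ => ?_
    simp [← mono_append, Fin.prod_univ_succ, List.ofFn_succ, smul_smul, mul_comm]

theorem coeffAt_map_mono_ofFn (hW' : IsExtensionClosed W')
    (hg : ∀ i, g (mono F W [i]) = ∑ j, c i j • mono F W' [j]) {d : ℕ} (U V : Fin d → Fin m)
    (hV : List.ofFn V ∉ W') :
    coeffAt hW' hV (g (mono F W (List.ofFn U))) = ∏ k, c (U k) (V k) := by
  simp [map_mono_ofFn hg, coeffAt_mono]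

theorem ofFn_notMem_of_forall_ne_zero (hW' : IsExtensionClosed W')
    (hg : ∀ i, g (mono F W [i]) = ∑ j, c i j • mono F W' [j]) {d : ℕ} {U V : Fin d → Fin m}
    (hV : List.ofFn V ∉ W') (hc : ∀ k, c (U k) (V k) ≠ 0) : List.ofFn U ∉ W := by
  intro hU
  have h := coeffAt_map_mono_ofFn hW' hg U V hV
  rw [mono_eq_zero_of_mem hU, map_zero, map_zero] at h
  exact Finset.prod_ne_zero_iff.2 (fun k _ => hc k) h.symm

end Expansion

section LinearAlgebra

open Matrix

variable {K M N ι κ : Type*} [Field K] [AddCommGroup M] [Module K M] [AddCommGroup N]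
  [Module K N] [Fintype ι] [Fintype κ] {x : ι → M} {y : κ → N}

theorem LinearMap.map_sum_smul_eq_sum_vecMul_smul (f : M →ₗ[K] N) {c : Matrix ι κ K}
    (hf : ∀ i, f (x i) = ∑ j, c i j • y j) (t : ι → K) :
    f (∑ i, t i • x i) = ∑ j, (t ᵥ* c) j • y j := by
  simp only [map_sum, map_smul, hf, Finset.smul_sum, smul_smul, vecMul, dotProduct,
    Finset.sum_smul]
  exact Finset.sum_comm

theorem Matrix.isUnit_of_linearIndependent [DecidableEq ι] {f : M →ₗ[K] N}
    (hf_inj : Function.Injective f) (hx : LinearIndependent K x) {c : Matrix ι ι K}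
    {y : ι → N} (hf : ∀ i, f (x i) = ∑ j, c i j • y j) : IsUnit c := by
  refine vecMul_injective_iff_isUnit.1 fun t s hts => funext ?_
  refine Fintype.linearIndependent_iffₛ.1 hx t s (hf_inj ?_)
  rw [f.map_sum_smul_eq_sum_vecMul_smul hf, f.map_sum_smul_eq_sum_vecMul_smul hf,
    show t ᵥ* c = s ᵥ* c from hts]

theorem LinearEquiv.symm_apply_eq_sum_inv_smul [DecidableEq ι] (f : M ≃ₗ[K] N)
    {c : Matrix ι ι K} (hc : IsUnit c) {y : ι → N} (hf : ∀ i, f (x i) = ∑ j, c i j • y j) (j : ι) :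
    f.symm (y j) = ∑ i, c⁻¹ j i • x i := by
  have hrow : c⁻¹ j ᵥ* c = Pi.single j 1 := by
    change (c⁻¹ * c) j = _
    rw [nonsing_inv_mul _ ((isUnit_iff_isUnit_det c).1 hc)]
    ext
    simp [one_apply, Pi.single_apply, eq_comm]
  rw [LinearEquiv.symm_apply_eq, ← LinearEquiv.coe_toLinearMap,
    LinearMap.map_sum_smul_eq_sum_vecMul_smul _ hf, hrow]
  simp [Pi.single_apply]

end LinearAlgebra

section MonomialMatrix

open Matrix

variable {ι R : Type*} [Fintype ι] [Semiring R]

theorem Matrix.exists_ne_zero_of_mul_apply_ne_zero {A B : Matrix ι ι R} {i j : ι}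
    (h : (A * B) i j ≠ 0) : ∃ k, A i k ≠ 0 ∧ B k j ≠ 0 := by
  obtain ⟨k, -, hk⟩ := Finset.exists_ne_zero_of_sum_ne_zero (by rwa [mul_apply] at h)
  exact ⟨k, ne_zero_and_ne_zero_of_mul hk⟩

theorem Matrix.exists_perm_ne_zero_iff_of_mul_eq_one [DecidableEq ι] [NoZeroDivisors R]
    [Nontrivial R] {A B : Matrix ι ι R} (hAB : A * B = 1)
    (h : ∀ i j j', A i j ≠ 0 → B j' i ≠ 0 → j' = j) :
    ∃ σ : Equiv.Perm ι, ∀ i j, A i j ≠ 0 ↔ j = σ i := by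
  choose τ hτ using fun i : ι =>
    exists_ne_zero_of_mul_apply_ne_zero (show (A * B) i i ≠ 0 by simp [hAB])
  have hsupp : ∀ i j, A i j ≠ 0 ↔ j = τ i := fun i j =>
    ⟨fun hij => (h i j (τ i) hij (hτ i).2).symm, by rintro rfl; exact (hτ i).1⟩
  have hinj : Function.Injective τ := by
    intro a b hab
    by_contra hne
    have hprod : (A * B) a b = A a (τ a) * B (τ a) b :=
      mul_apply.trans <| Finset.sum_eq_single _
        (fun k _ hk => by rw [not_ne_iff.1 (mt (hsupp a k).1 hk), zero_mul]) (by simp)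
    rw [hAB, one_apply_ne hne, hab] at hprod
    exact mul_ne_zero (hab ▸ (hτ a).1) (hτ b).2 hprod.symm
  exact ⟨Equiv.ofBijective τ (Finite.injective_iff_bijective.1 hinj), hsupp⟩

end MonomialMatrix

section Transfer

variable {F} {w : ℕ → Fin m} {i j j' : Fin m} {T : Set (List (Fin m))}
  {c c' : Matrix (Fin m) (Fin m) F}

theorem UniformlyRecurrent.eq_of_ne_zero_of_ne_zero (hw : UniformlyRecurrent w)
    (hj : j ∈ Set.range w) (hc'c : c' * c = 1)
    (hc : ∀ d (U V : Fin d → Fin m), List.ofFn V ∈ factorsOf w →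
      (∀ k, c (U k) (V k) ≠ 0) → List.ofFn U ∈ T)
    (hc' : ∀ d (U V : Fin d → Fin m), List.ofFn U ∈ T →
      (∀ k, c' (V k) (U k) ≠ 0) → List.ofFn V ∈ factorsOf w)
    (hij : c i j ≠ 0) (hj'i : c' j' i ≠ 0) : j' = j := by
  classical
  by_contra hne
  set φ : Fin m → Fin m := Function.update id j j'
  have hlift : ∀ b, ∃ a, c a b ≠ 0 ∧ c' (φ b) a ≠ 0 := by
    intro b
    by_cases hb : b = j
    · subst hb
      exact ⟨i, hij, by simpa [φ] using hj'i⟩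
    · obtain ⟨a, h₁, h₂⟩ :=
        Matrix.exists_ne_zero_of_mul_apply_ne_zero (show (c' * c) b b ≠ 0 by simp [hc'c])
      exact ⟨a, h₂, by simpa [φ, hb] using h₁⟩
  choose ρ hρ using hlift
  have hmap : ∀ u ∈ factorsOf w, u.map φ ∈ factorsOf w := by
    intro u hu
    rw [← List.ofFn_get u] at hu ⊢
    rw [List.map_ofFn]
    exact hc' _ _ _ (hc _ (ρ ∘ u.get) _ hu fun k => (hρ _).1) fun k => (hρ _).2
  obtain ⟨a, ha⟩ := hw.mem_range_of_map_mem hj hmap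
  by_cases haj : a = j <;> simp_all [φ]

end Transfer

theorem statement13_general (F : Type) [Field F] (n : ℕ) (w w' : ℕ → Fin n)
    (hur' : UniformlyRecurrent w')
    (hall : ∀ j : Fin n, ∃ i : ℕ, w i = j) (hall' : ∀ j : Fin n, ∃ i : ℕ, w' i = j)
    (f : MonAlg F ((factorsOf w)ᶜ) ≃ₐ[F] MonAlg F ((factorsOf w')ᶜ))
    (hgraded : ∀ d : ℕ, ∀ a ∈ homog F ((factorsOf w)ᶜ) d,
        f a ∈ homog F ((factorsOf w')ᶜ) d) :
    ∃ (lam : Fin n → F) (σ : Equiv.Perm (Fin n)), (∀ i, lam i ≠ 0) ∧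
      ∀ i : Fin n, f (mono F ((factorsOf w)ᶜ) [i]) =
        lam i • mono F ((factorsOf w')ᶜ) [σ i] := by
  classical
  have hW := isExtensionClosed_compl_factorsOf w
  have hW' := isExtensionClosed_compl_factorsOf w'
  have hletters : ∀ i, [i] ∉ (factorsOf w)ᶜ := fun i => by
    obtain ⟨p, rfl⟩ := hall i
    exact Set.notMem_compl_iff.2 (singleton_mem_factorsOf w p)
  obtain ⟨c, hc⟩ : ∃ c : Matrix (Fin n) (Fin n) F,
      ∀ i, f (mono F _ [i]) = ∑ j, c i j • mono F ((factorsOf w')ᶜ) [j] := by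
    have h1 : ∀ i, f (mono F _ [i]) ∈ homog F ((factorsOf w')ᶜ) 1 := fun i =>
      hgraded 1 _ (by rw [homog_one_eq_span]; exact Submodule.subset_span ⟨i, rfl⟩)
    simp only [homog_one_eq_span, Submodule.mem_span_range_iff_exists_fun] at h1
    choose c hc using h1
    exact ⟨Matrix.of c, fun i => (hc i).symm⟩
  have hunit : IsUnit c := Matrix.isUnit_of_linearIndependent (f := f.toLinearMap) f.injective
    (linearIndependent_mono hW List.singleton_injective hletters) hc
  have hdet := (Matrix.isUnit_iff_isUnit_det c).1 hunit
  have hc' := f.toLinearEquiv.symm_apply_eq_sum_inv_smul hunit hc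
  have hpull : ∀ d (U V : Fin d → Fin n), List.ofFn V ∈ factorsOf w' →
      (∀ k, c (U k) (V k) ≠ 0) → List.ofFn U ∈ factorsOf w := fun _ _ _ hV hne =>
    Set.notMem_compl_iff.1 <|
      ofFn_notMem_of_forall_ne_zero hW' (g := f.toAlgHom) hc (Set.notMem_compl_iff.2 hV) hne
  have hpush : ∀ d (U V : Fin d → Fin n), List.ofFn U ∈ factorsOf w →
      (∀ k, c⁻¹ (V k) (U k) ≠ 0) → List.ofFn V ∈ factorsOf w' := fun _ _ _ hU hne =>
    Set.notMem_compl_iff.1 <| ofFn_notMem_of_forall_ne_zero hW (g := f.symm.toAlgHom) hc'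
      (Set.notMem_compl_iff.2 hU) hne
  obtain ⟨σ, hσ⟩ := Matrix.exists_perm_ne_zero_iff_of_mul_eq_one (Matrix.mul_nonsing_inv c hdet)
    fun i j j' hij hj'i => hur'.eq_of_ne_zero_of_ne_zero (hall' j)
      (Matrix.nonsing_inv_mul c hdet) hpull hpush hij hj'i
  refine ⟨fun i => c i (σ i), σ, fun i => (hσ i _).2 rfl, fun i => ?_⟩
  rw [hc, Finset.sum_eq_single (σ i) (fun j _ hj => by rw [not_ne_iff.1 (mt (hσ i j).1 hj),
    zero_smul]) (by simp)]

/-- Let `w, w'` be uniformly recurrent right-infinite words over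
`{x_1,…,x_n}` in which every letter occurs, with associated projectively simple
monomial algebras `A = A_w`, `B = A_{w'}`.  Then every graded `F`-algebra
isomorphism `f : A → B` is given by a permutation and scaling of the generators:
`f(x_i) = λ_i x_{σ(i)}` with `λ_i ∈ F^×` and `σ ∈ S_n`. -/
theorem statement13 (F : Type) [Field F] (n : ℕ) (w w' : ℕ → Fin n)
    (hur : UniformlyRecurrent w) (hur' : UniformlyRecurrent w')
    (hall : ∀ j : Fin n, ∃ i : ℕ, w i = j) (hall' : ∀ j : Fin n, ∃ i : ℕ, w' i = j)
    (f : MonAlg F ((factorsOf w)ᶜ) ≃ₐ[F] MonAlg F ((factorsOf w')ᶜ))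
    (hgraded : ∀ d : ℕ, ∀ a ∈ homog F ((factorsOf w)ᶜ) d,
        f a ∈ homog F ((factorsOf w')ᶜ) d) :
    ∃ (lam : Fin n → F) (σ : Equiv.Perm (Fin n)), (∀ i, lam i ≠ 0) ∧
      ∀ i : Fin n, f (mono F ((factorsOf w)ᶜ) [i]) =
        lam i • mono F ((factorsOf w')ᶜ) [σ i] :=
  statement13_general F n w w' hur' hall hall' f hgraded
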